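/- Let ℓ be a balanced zero-neighborhood labeling of GP(n,2). Then the number of type-2 vertices of GP(n,2) (vertices with exactly one neighbor labeled 0) is divisible by n / gcd(n,15). -/
import Mathlib


open Finset

noncomputable def vertexWeight {V Γ : Type*} [Fintype V] [AddCommMonoid Γ]
    (G : SimpleGraph V) (ℓ : V → Γ) (x : V) : Γ := by
  classical exact ∑ y ∈ Finset.univ.filter (fun v => G.Adj x v), ℓ y

/-- `ℓ` is a distance magic labeling of `G` with magic constant `μ`. -/
def IsDistMagic {V Γ : Type*} [Fintype V] [AddCommMonoid Γ]
    (G : SimpleGraph V) (ℓ : V → Γ) (μ : Γ) : Prop :=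
  Function.Bijective ℓ ∧ ∀ x, vertexWeight G ℓ x = μ

noncomputable def degOf {V : Type*} [Fintype V] (G : SimpleGraph V) (v : V) : ℕ := by
  classical exact (Finset.univ.filter (fun u => G.Adj v u)).card

/-- The generalized Petersen graph `GP(n,k)` on vertex set `ZMod n ⊕ ZMod n`:
`Sum.inl i` is the outer vertex `x_i`, `Sum.inr i` the inner vertex `y_i`. -/
def GP (n k : ℕ) : SimpleGraph (ZMod n ⊕ ZMod n) :=
  SimpleGraph.fromRel (fun a b =>
    match a, b with
    | Sum.inl i, Sum.inl j => j = i + 1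
    | Sum.inr i, Sum.inr j => j = i + (k : ZMod n)
    | Sum.inl i, Sum.inr j => i = j
    | _, _ => False)

/-- A balanced zero-neighborhood labeling of a graph `G` on `2n` vertices. -/
noncomputable def IsBZN {V : Type*} [Fintype V] (G : SimpleGraph V) (n : ℕ)
    (ℓ : V → ZMod 2) : Prop := by
  classical exact
    (Finset.univ.filter (fun v => ℓ v = 0)).card = n ∧
    (Finset.univ.filter (fun v => ℓ v = 1)).card = n ∧
    ∀ v, vertexWeight G ℓ v = 0

attribute [local instance] Classical.propDecidable


section Helpers

open Finset

lemma vertexWeight_eq' {V : Type*} [Fintype V] (G : SimpleGraph V) (ℓ : V → ZMod 2) (x : V) :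
    vertexWeight G ℓ x = ∑ y ∈ Finset.univ.filter (fun v => G.Adj x v), ℓ y := rfl

lemma adj_ll {n k : ℕ} (i j : ZMod n) :
    (GP n k).Adj (Sum.inl i) (Sum.inl j) ↔ i ≠ j ∧ (j = i + 1 ∨ i = j + 1) := by
  simp [GP, SimpleGraph.fromRel_adj]

lemma adj_lr {n k : ℕ} (i j : ZMod n) :
    (GP n k).Adj (Sum.inl i) (Sum.inr j) ↔ i = j := by
  simp [GP, SimpleGraph.fromRel_adj]

lemma adj_rl {n k : ℕ} (i j : ZMod n) :
    (GP n k).Adj (Sum.inr i) (Sum.inl j) ↔ i = j := by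
  simp [GP, SimpleGraph.fromRel_adj, eq_comm]

lemma adj_rr {n k : ℕ} (i j : ZMod n) :
    (GP n k).Adj (Sum.inr i) (Sum.inr j) ↔ i ≠ j ∧ (j = i + (k : ZMod n) ∨ i = j + (k : ZMod n)) := by
  simp [GP, SimpleGraph.fromRel_adj]

lemma filter_adj_inl {n : ℕ} [NeZero n] (h1 : (1 : ZMod n) ≠ 0) (i : ZMod n) :
    (Finset.univ.filter (fun u => (GP n 2).Adj (Sum.inl i) u)) =
      {Sum.inl (i+1), Sum.inl (i-1), Sum.inr i} := by
  ext u
  rcases u with j | j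
  · simp only [Finset.mem_filter, Finset.mem_univ, true_and, adj_ll,
      Finset.mem_insert, Finset.mem_singleton, Sum.inl.injEq, reduceCtorEq, or_false]
    constructor
    · rintro ⟨hne, h | h⟩
      · exact Or.inl h
      · exact Or.inr (eq_sub_of_add_eq h.symm)
    · rintro (rfl | rfl)
      · exact ⟨fun h => h1 (by linear_combination -h), Or.inl rfl⟩
      · exact ⟨fun h => h1 (by linear_combination h), Or.inr (sub_add_cancel i 1).symm⟩
  · simp only [Finset.mem_filter, Finset.mem_univ, true_and, adj_lr,
      Finset.mem_insert, Finset.mem_singleton, Sum.inr.injEq, reduceCtorEq, false_or]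
    exact eq_comm

lemma filter_adj_inr {n : ℕ} [NeZero n] (h2 : (2 : ZMod n) ≠ 0) (i : ZMod n) :
    (Finset.univ.filter (fun u => (GP n 2).Adj (Sum.inr i) u)) =
      {Sum.inr (i+2), Sum.inr (i-2), Sum.inl i} := by
  have hcast : ((2 : ℕ) : ZMod n) = 2 := by push_cast; ring
  ext u
  rcases u with j | j
  · simp only [Finset.mem_filter, Finset.mem_univ, true_and, adj_rl,
      Finset.mem_insert, Finset.mem_singleton, Sum.inl.injEq, reduceCtorEq, false_or]
    exact eq_comm
  · simp only [Finset.mem_filter, Finset.mem_univ, true_and, adj_rr, hcast,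
      Finset.mem_insert, Finset.mem_singleton, Sum.inr.injEq, reduceCtorEq, or_false]
    constructor
    · rintro ⟨hne, h | h⟩
      · exact Or.inl h
      · exact Or.inr (eq_sub_of_add_eq h.symm)
    · rintro (rfl | rfl)
      · exact ⟨fun h => h2 (by linear_combination -h), Or.inl rfl⟩
      · exact ⟨fun h => h2 (by linear_combination h), Or.inr (sub_add_cancel i 2).symm⟩

lemma dvd_card_of_shift {V : Type*} [Fintype V] [DecidableEq V] (σ : Equiv.Perm V) (m : ℕ)
    (hm : 0 < m) (hper : ∀ v, (σ ^ m) v = v)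
    (hfree : ∀ (k : ℕ) (v : V), (σ ^ k) v = v → m ∣ k)
    (S : Finset V) (hinv : ∀ v ∈ S, σ v ∈ S) : m ∣ S.card := by
  generalize hN : S.card = N
  induction N using Nat.strong_induction_on generalizing S with
  | _ N ih =>
    rcases S.eq_empty_or_nonempty with rfl | ⟨v, hv⟩
    · simp only [Finset.card_empty] at hN
      exact hN ▸ dvd_zero m
    · have hiter : ∀ (j : ℕ) (u : V), u ∈ S → (σ ^ j) u ∈ S := by
        intro j
        induction j with
        | zero => simpa using fun u h => h
        | succ j hj =>
          intro u hu
          rw [pow_succ, Equiv.Perm.mul_apply]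
          exact hj _ (hinv u hu)
      set O : Finset V := (Finset.univ : Finset (Fin m)).image (fun k : Fin m => (σ ^ (k : ℕ)) v) with hO
      have hOS : O ⊆ S := by
        intro u hu
        rw [hO, Finset.mem_image] at hu
        obtain ⟨k, _, rfl⟩ := hu
        exact hiter _ _ hv
      have haux : ∀ k l : Fin m, (k:ℕ) ≤ (l:ℕ) → (σ ^ (k:ℕ)) v = (σ ^ (l:ℕ)) v → k = l := by
        intro k l hle h
        have hfix : (σ ^ ((l:ℕ) - k)) ((σ ^ (k:ℕ)) v) = (σ ^ (k:ℕ)) v := by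
          rw [← Equiv.Perm.mul_apply, ← pow_add, Nat.sub_add_cancel hle]
          exact h.symm
        have hd := hfree _ _ hfix
        have hlt : (l:ℕ) - k < m := lt_of_le_of_lt (Nat.sub_le _ _) l.isLt
        have h0 : (l:ℕ) - k = 0 := Nat.eq_zero_of_dvd_of_lt hd hlt
        exact Fin.ext (by omega)
      have hinj : ∀ k ∈ (Finset.univ : Finset (Fin m)), ∀ l ∈ (Finset.univ : Finset (Fin m)),
          (σ ^ (k:ℕ)) v = (σ ^ (l:ℕ)) v → k = l := by
        intro k _ l _ h
        rcases le_total (k:ℕ) (l:ℕ) with h' | h'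
        · exact haux k l h' h
        · exact (haux l k h' h.symm).symm
      have hcardO : O.card = m := by
        rw [hO, Finset.card_image_of_injOn hinj, Finset.card_univ, Fintype.card_fin]
      have hmN : m ≤ N := by
        rw [← hN, ← hcardO]
        exact Finset.card_le_card hOS
      have hsd : (S \ O).card = N - m := by rw [Finset.card_sdiff_of_subset hOS, hcardO, hN]
      have hinv' : ∀ u ∈ S \ O, σ u ∈ S \ O := by
        intro u hu
        rw [Finset.mem_sdiff] at hu ⊢
        refine ⟨hinv u hu.1, fun hmem => hu.2 ?_⟩
        rw [hO, Finset.mem_image] at hmem ⊢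
        obtain ⟨k, _, hk⟩ := hmem
        rcases Nat.eq_zero_or_pos (k:ℕ) with hk0 | hkpos
        · refine ⟨⟨m-1, by omega⟩, Finset.mem_univ _, ?_⟩
          have hveq : σ u = v := by rw [← hk, hk0, pow_zero]; rfl
          have hm1 : σ ((σ ^ (m-1)) v) = v := by
            rw [← Equiv.Perm.mul_apply, ← pow_succ', Nat.sub_add_cancel hm]
            exact hper v
          exact (σ.injective (hveq.trans hm1.symm)).symm
        · refine ⟨⟨(k:ℕ)-1, by omega⟩, Finset.mem_univ _, ?_⟩
          have h1 : σ ((σ ^ ((k:ℕ)-1)) v) = σ u := by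
            rw [← Equiv.Perm.mul_apply, ← pow_succ', Nat.sub_add_cancel hkpos]
            exact hk
          exact σ.injective h1
      have hdvd : m ∣ (S \ O).card := ih ((S \ O).card) (by omega) (S \ O) hinv' rfl
      have hNe : N = (S \ O).card + m := by omega
      rw [hNe]
      exact Nat.dvd_add hdvd dvd_rfl

lemma key16 : ∀ x0 x1 x2 x3 x4 x5 x6 x7 x8 x9 x10 x11 x12 x13 x14 x15 : ZMod 2,
    x6 = x4 + x3 + x2 + x0 → x7 = x5 + x4 + x3 + x1 → x8 = x6 + x5 + x4 + x2 →
    x9 = x7 + x6 + x5 + x3 → x10 = x8 + x7 + x6 + x4 → x11 = x9 + x8 + x7 + x5 →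
    x12 = x10 + x9 + x8 + x6 → x13 = x11 + x10 + x9 + x7 → x14 = x12 + x11 + x10 + x8 →
    x15 = x13 + x12 + x11 + x9 → x15 = x0 := by
  intro x0 x1 x2 x3 x4 x5 x6 x7 x8 x9 x10 x11 x12 x13 x14 x15 h6 h7 h8 h9 h10 h11 h12 h13 h14 h15
  subst h6 h7 h8 h9 h10 h11 h12 h13 h14 h15
  revert x0 x1 x2 x3 x4 x5
  decide

lemma per15 {n : ℕ} (a : ZMod n → ZMod 2)
    (K : ∀ i : ZMod n, a (i+6) = a (i+4) + a (i+3) + a (i+2) + a i) :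
    ∀ i : ZMod n, a (i+15) = a i := by
  intro i
  have k0 := K i
  have k1 : a (i+7) = a (i+5) + a (i+4) + a (i+3) + a (i+1) := by
    have h := K (i+1); rw [(by ring : i+1+6 = i+7), (by ring : i+1+4 = i+5), (by ring : i+1+3 = i+4), (by ring : i+1+2 = i+3)] at h; exact h
  have k2 : a (i+8) = a (i+6) + a (i+5) + a (i+4) + a (i+2) := by
    have h := K (i+2); rw [(by ring : i+2+6 = i+8), (by ring : i+2+4 = i+6), (by ring : i+2+3 = i+5), (by ring : i+2+2 = i+4)] at h; exact h
  have k3 : a (i+9) = a (i+7) + a (i+6) + a (i+5) + a (i+3) := by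
    have h := K (i+3); rw [(by ring : i+3+6 = i+9), (by ring : i+3+4 = i+7), (by ring : i+3+3 = i+6), (by ring : i+3+2 = i+5)] at h; exact h
  have k4 : a (i+10) = a (i+8) + a (i+7) + a (i+6) + a (i+4) := by
    have h := K (i+4); rw [(by ring : i+4+6 = i+10), (by ring : i+4+4 = i+8), (by ring : i+4+3 = i+7), (by ring : i+4+2 = i+6)] at h; exact h
  have k5 : a (i+11) = a (i+9) + a (i+8) + a (i+7) + a (i+5) := by
    have h := K (i+5); rw [(by ring : i+5+6 = i+11), (by ring : i+5+4 = i+9), (by ring : i+5+3 = i+8), (by ring : i+5+2 = i+7)] at h; exact h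
  have k6 : a (i+12) = a (i+10) + a (i+9) + a (i+8) + a (i+6) := by
    have h := K (i+6); rw [(by ring : i+6+6 = i+12), (by ring : i+6+4 = i+10), (by ring : i+6+3 = i+9), (by ring : i+6+2 = i+8)] at h; exact h
  have k7 : a (i+13) = a (i+11) + a (i+10) + a (i+9) + a (i+7) := by
    have h := K (i+7); rw [(by ring : i+7+6 = i+13), (by ring : i+7+4 = i+11), (by ring : i+7+3 = i+10), (by ring : i+7+2 = i+9)] at h; exact h
  have k8 : a (i+14) = a (i+12) + a (i+11) + a (i+10) + a (i+8) := by
    have h := K (i+8); rw [(by ring : i+8+6 = i+14), (by ring : i+8+4 = i+12), (by ring : i+8+3 = i+11), (by ring : i+8+2 = i+10)] at h; exact h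
  have k9 : a (i+15) = a (i+13) + a (i+12) + a (i+11) + a (i+9) := by
    have h := K (i+9); rw [(by ring : i+9+6 = i+15), (by ring : i+9+4 = i+13), (by ring : i+9+3 = i+12), (by ring : i+9+2 = i+11)] at h; exact h
  exact key16 (a i) (a (i+1)) (a (i+2)) (a (i+3)) (a (i+4)) (a (i+5)) (a (i+6)) (a (i+7)) (a (i+8)) (a (i+9)) (a (i+10)) (a (i+11)) (a (i+12)) (a (i+13)) (a (i+14)) (a (i+15)) k0 k1 k2 k3 k4 k5 k6 k7 k8 k9

lemma s1 : ∀ x y z : ZMod 2, x + (y + z) = 0 → z = x + y := by decide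
lemma s2' : ∀ a b c d e : ZMod 2, c = a + b + (d + e) → a = b + c + d + e := by decide
lemma s3 : ∀ x y : ZMod 2, x + y = 0 → y = x := by decide
lemma s4 : ∀ w x y z : ZMod 2, w = z + x → x = w + y → y = x + z → z = y + w → w = 0 := by decide

def shiftPerm (n : ℕ) (c : ZMod n) : Equiv.Perm (ZMod n ⊕ ZMod n) :=
  Equiv.sumCongr (Equiv.addRight c) (Equiv.addRight c)

lemma shiftPerm_apply_inl {n : ℕ} (c i : ZMod n) : shiftPerm n c (Sum.inl i) = Sum.inl (i + c) := rfl

lemma shiftPerm_apply_inr {n : ℕ} (c i : ZMod n) : shiftPerm n c (Sum.inr i) = Sum.inr (i + c) := rfl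

lemma adj_shift {n : ℕ} (c : ZMod n) (a b : ZMod n ⊕ ZMod n) :
    (GP n 2).Adj (shiftPerm n c a) (shiftPerm n c b) ↔ (GP n 2).Adj a b := by
  have hc : ∀ x y d : ZMod n, (x + c = y + c + d) ↔ (x = y + d) := fun x y d => by
    rw [add_right_comm, add_left_inj]
  rcases a with i|i <;> rcases b with j|j <;>
    simp only [shiftPerm_apply_inl, shiftPerm_apply_inr, adj_ll, adj_lr, adj_rl, adj_rr,
      hc, add_left_inj, ne_eq]

lemma shiftPerm_pow {n : ℕ} (c : ZMod n) (k : ℕ) (v : ZMod n ⊕ ZMod n) :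
    ((shiftPerm n c) ^ k) v = shiftPerm n ((k : ZMod n) * c) v := by
  induction k with
  | zero => cases v <;> simp [shiftPerm]
  | succ k ih =>
    rw [pow_succ', Equiv.Perm.mul_apply, ih]
    cases v <;>
      simp only [shiftPerm_apply_inl, shiftPerm_apply_inr] <;>
      (congr 1; push_cast; ring)

end Helpers

theorem stmt10 (n : ℕ) [NeZero n] (ℓ : ZMod n ⊕ ZMod n → ZMod 2)
    (hbzn : IsBZN (GP n 2) n ℓ) :
    (n / Nat.gcd n 15) ∣
      (Finset.univ.filter (fun v : ZMod n ⊕ ZMod n =>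
        (Finset.univ.filter (fun u => (GP n 2).Adj v u ∧ ℓ u = 0)).card = 1)).card := by
  obtain ⟨hz, ho, hw⟩ : (Finset.univ.filter (fun v : ZMod n ⊕ ZMod n => ℓ v = 0)).card = n ∧
      (Finset.univ.filter (fun v : ZMod n ⊕ ZMod n => ℓ v = 1)).card = n ∧
      ∀ v, vertexWeight (GP n 2) ℓ v = 0 := hbzn
  suffices hshift : ∀ v, ℓ (shiftPerm n (15 : ZMod n) v) = ℓ v by
    have npos : 0 < n := Nat.pos_of_ne_zero (NeZero.ne n)
    have gpos : 0 < Nat.gcd n 15 := Nat.gcd_pos_of_pos_right _ (by norm_num)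
    have hgn : Nat.gcd n 15 ∣ n := Nat.gcd_dvd_left n 15
    have hg15 : Nat.gcd n 15 ∣ 15 := Nat.gcd_dvd_right n 15
    have mpos : 0 < n / Nat.gcd n 15 := Nat.div_pos (Nat.le_of_dvd npos hgn) gpos
    have hper : ∀ v, ((shiftPerm n 15) ^ (n / Nat.gcd n 15)) v = v := by
      intro v
      rw [shiftPerm_pow]
      have heq : (n / Nat.gcd n 15) * 15 = n * (15 / Nat.gcd n 15) :=
        Nat.eq_of_mul_eq_mul_right gpos
          (by rw [mul_right_comm, Nat.div_mul_cancel hgn, mul_assoc, Nat.div_mul_cancel hg15])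
      have hzero : ((n / Nat.gcd n 15 : ℕ) : ZMod n) * 15 = 0 := by
        have : (((n / Nat.gcd n 15) * 15 : ℕ) : ZMod n) = 0 :=
          (ZMod.natCast_eq_zero_iff _ n).mpr ⟨15 / Nat.gcd n 15, heq⟩
        push_cast at this
        exact this
      rw [hzero]
      cases v <;> simp [shiftPerm]
    have hfree : ∀ (k : ℕ) (v : ZMod n ⊕ ZMod n),
        ((shiftPerm n 15) ^ k) v = v → (n / Nat.gcd n 15) ∣ k := by
      intro k v h
      rw [shiftPerm_pow] at h
      have hz0 : (k : ZMod n) * 15 = 0 := by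
        rcases v with i | i <;>
          simp only [shiftPerm_apply_inl, shiftPerm_apply_inr, Sum.inl.injEq, Sum.inr.injEq] at h <;>
          rwa [add_eq_left] at h
      have hnk : n ∣ k * 15 := by
        have hcast : ((k * 15 : ℕ) : ZMod n) = 0 := by push_cast; exact hz0
        exact (ZMod.natCast_eq_zero_iff _ n).mp hcast
      have h2' : (n / Nat.gcd n 15) * Nat.gcd n 15 ∣ (k * (15 / Nat.gcd n 15)) * Nat.gcd n 15 := by
        rw [Nat.div_mul_cancel hgn, mul_assoc, Nat.div_mul_cancel hg15]
        exact hnk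
      have h3' := (Nat.mul_dvd_mul_iff_right gpos).mp h2'
      exact (Nat.coprime_div_gcd_div_gcd gpos).dvd_of_dvd_mul_right h3'
    have hinvS : ∀ v ∈ (Finset.univ.filter (fun v : ZMod n ⊕ ZMod n =>
        (Finset.univ.filter (fun u => (GP n 2).Adj v u ∧ ℓ u = 0)).card = 1)),
        shiftPerm n 15 v ∈ (Finset.univ.filter (fun v : ZMod n ⊕ ZMod n =>
        (Finset.univ.filter (fun u => (GP n 2).Adj v u ∧ ℓ u = 0)).card = 1)) := by
      intro v hv
      rw [Finset.mem_filter] at hv ⊢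
      refine ⟨Finset.mem_univ _, ?_⟩
      have himg : (Finset.univ.filter (fun u => (GP n 2).Adj (shiftPerm n 15 v) u ∧ ℓ u = 0)) =
          (Finset.univ.filter (fun u => (GP n 2).Adj v u ∧ ℓ u = 0)).image (shiftPerm n 15) := by
        ext u
        simp only [Finset.mem_filter, Finset.mem_univ, true_and, Finset.mem_image]
        constructor
        · rintro ⟨ha, hl⟩
          refine ⟨(shiftPerm n 15).symm u, ⟨?_, ?_⟩, (shiftPerm n 15).apply_symm_apply u⟩
          · have h' : (GP n 2).Adj (shiftPerm n 15 v) (shiftPerm n 15 ((shiftPerm n 15).symm u)) := by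
              rwa [(shiftPerm n 15).apply_symm_apply]
            exact (adj_shift _ _ _).mp h'
          · have h2 := hshift ((shiftPerm n 15).symm u)
            rw [(shiftPerm n 15).apply_symm_apply] at h2
            rw [← h2]
            exact hl
        · rintro ⟨w, ⟨ha, hl⟩, rfl⟩
          exact ⟨(adj_shift _ _ _).mpr ha, (hshift w).trans hl⟩
      rw [himg, Finset.card_image_of_injective _ (shiftPerm n 15).injective]
      exact hv.2
    exact dvd_card_of_shift (shiftPerm n 15) _ mpos hper hfree _ hinvS
  -- now prove the shift-invariance of ℓ
  rcases eq_or_ne n 1 with rfl | hn1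
  · rintro (i | i)
    · exact congrArg (fun t => ℓ (Sum.inl t)) (by revert i; decide)
    · exact congrArg (fun t => ℓ (Sum.inr t)) (by revert i; decide)
  rcases eq_or_ne n 2 with rfl | hn2
  · exfalso
    have NR2 : ∀ i : ZMod 2, (Finset.univ.filter (fun u => (GP 2 2).Adj (Sum.inr i) u)) =
        {Sum.inl i} := by
      intro i
      ext u
      rcases u with j | j <;>
        simp only [Finset.mem_filter, Finset.mem_univ, true_and, adj_rl, adj_rr,
          Finset.mem_singleton, Sum.inl.injEq, Sum.inr.injEq, reduceCtorEq] <;>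
        revert i j <;> decide
    have NL2 : ∀ i : ZMod 2, (Finset.univ.filter (fun u => (GP 2 2).Adj (Sum.inl i) u)) =
        {Sum.inl (i+1), Sum.inr i} := by
      intro i
      ext u
      rcases u with j | j <;>
        simp only [Finset.mem_filter, Finset.mem_univ, true_and, adj_ll, adj_lr,
          Finset.mem_insert, Finset.mem_singleton, Sum.inl.injEq, Sum.inr.injEq, reduceCtorEq,
          or_false, false_or] <;>
        revert i j <;> decide
    have hx0 : ∀ i : ZMod 2, ℓ (Sum.inl i) = 0 := by
      intro i
      have h := hw (Sum.inr i)
      rwa [vertexWeight_eq', NR2 i, Finset.sum_singleton] at h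
    have hr0 : ∀ i : ZMod 2, ℓ (Sum.inr i) = 0 := by
      intro i
      have h := hw (Sum.inl i)
      rw [vertexWeight_eq', NL2 i, Finset.sum_insert (by simp), Finset.sum_singleton,
        hx0 (i+1), zero_add] at h
      exact h
    have hempty : (Finset.univ.filter (fun v : ZMod 2 ⊕ ZMod 2 => ℓ v = 1)) = ∅ := by
      refine Finset.filter_eq_empty_iff.mpr fun v _ => ?_
      rcases v with i | i
      · simp [hx0 i]
      · simp [hr0 i]
    rw [hempty, Finset.card_empty] at ho
    omega
  rcases eq_or_ne n 4 with rfl | hn4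
  · exfalso
    have h1 : (1 : ZMod 4) ≠ 0 := by decide
    have h2 : (2 : ZMod 4) ≠ 0 := by decide
    have NR4 : ∀ i : ZMod 4, (Finset.univ.filter (fun u => (GP 4 2).Adj (Sum.inr i) u)) =
        {Sum.inr (i+2), Sum.inl i} := by
      intro i
      ext u
      rcases u with j | j <;>
        simp only [Finset.mem_filter, Finset.mem_univ, true_and, adj_rl, adj_rr,
          Finset.mem_insert, Finset.mem_singleton, Sum.inl.injEq, Sum.inr.injEq, reduceCtorEq,
          or_false, false_or] <;>
        revert i j <;> decide
    have E1 : ∀ i : ZMod 4, ℓ (Sum.inl (i+1)) + (ℓ (Sum.inl (i-1)) + ℓ (Sum.inr i)) = 0 := by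
      intro i
      have h := hw (Sum.inl i)
      rw [vertexWeight_eq', filter_adj_inl h1 i,
        Finset.sum_insert (by
          simp only [Finset.mem_insert, Finset.mem_singleton, Sum.inl.injEq, reduceCtorEq, or_false]
          exact fun hh => h2 (by linear_combination hh)),
        Finset.sum_insert (by simp), Finset.sum_singleton] at h
      exact h
    have E2 : ∀ i : ZMod 4, ℓ (Sum.inr (i+2)) + ℓ (Sum.inl i) = 0 := by
      intro i
      have h := hw (Sum.inr i)
      rwa [vertexWeight_eq', NR4 i, Finset.sum_insert (by simp), Finset.sum_singleton] at h
    have hbb : ∀ i : ZMod 4, ℓ (Sum.inr i) = ℓ (Sum.inl (i+1)) + ℓ (Sum.inl (i-1)) :=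
      fun i => s1 _ _ _ (E1 i)
    have hma : ∀ i : ZMod 4, ℓ (Sum.inl i) = ℓ (Sum.inr (i+2)) := fun i => s3 _ _ (E2 i)
    have hrec : ∀ i : ZMod 4, ℓ (Sum.inl i) = ℓ (Sum.inl (i+3)) + ℓ (Sum.inl (i+1)) := by
      intro i
      rw [hma i, hbb (i+2), (by ring : i+2+1 = i+3), show i+2-1 = i+1 by ring]
    have hall0 : ∀ i : ZMod 4, ℓ (Sum.inl i) = 0 := by
      intro i
      have r0 := hrec i
      have r1 := hrec (i+1)
      rw [(by rw [add_assoc, show (1:ZMod 4)+3 = 0 from by decide, add_zero] : i+1+3 = i),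
        (by ring : i+1+1 = i+2)] at r1
      have r2 := hrec (i+2)
      rw [(by rw [add_assoc, show (2:ZMod 4)+3 = 1 from by decide] : i+2+3 = i+1),
        (by ring : i+2+1 = i+3)] at r2
      have r3 := hrec (i+3)
      rw [(by rw [add_assoc, show (3:ZMod 4)+3 = 2 from by decide] : i+3+3 = i+2),
        (by rw [add_assoc, show (3:ZMod 4)+1 = 0 from by decide, add_zero] : i+3+1 = i)] at r3
      exact s4 _ _ _ _ r0 r1 r2 r3
    have hallr : ∀ i : ZMod 4, ℓ (Sum.inr i) = 0 := by
      intro i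
      rw [hbb i, hall0, hall0, add_zero]
    have hempty : (Finset.univ.filter (fun v : ZMod 4 ⊕ ZMod 4 => ℓ v = 1)) = ∅ := by
      refine Finset.filter_eq_empty_iff.mpr fun v _ => ?_
      rcases v with i | i
      · simp [hall0 i]
      · simp [hallr i]
    rw [hempty, Finset.card_empty] at ho
    omega
  -- main case : n ∉ {1,2,4}
  have npos : 0 < n := Nat.pos_of_ne_zero (NeZero.ne n)
  have h1 : (1 : ZMod n) ≠ 0 := by
    intro h
    have : n ∣ 1 := (ZMod.natCast_eq_zero_iff 1 n).mp (by exact_mod_cast h)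
    exact hn1 (Nat.dvd_one.mp this)
  have h2 : (2 : ZMod n) ≠ 0 := by
    intro h
    have hd : n ∣ 2 := (ZMod.natCast_eq_zero_iff 2 n).mp (by exact_mod_cast h)
    rcases (Nat.dvd_prime Nat.prime_two).mp hd with h' | h'
    · exact hn1 h'
    · exact hn2 h'
  have h4 : (4 : ZMod n) ≠ 0 := by
    intro h
    have hd : n ∣ 4 := (ZMod.natCast_eq_zero_iff 4 n).mp (by exact_mod_cast h)
    have hle : n ≤ 4 := Nat.le_of_dvd (by norm_num) hd
    interval_cases n <;> omega
  have E1 : ∀ i : ZMod n, ℓ (Sum.inl (i+1)) + (ℓ (Sum.inl (i-1)) + ℓ (Sum.inr i)) = 0 := by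
    intro i
    have h := hw (Sum.inl i)
    rw [vertexWeight_eq', filter_adj_inl h1 i,
      Finset.sum_insert (by
        simp only [Finset.mem_insert, Finset.mem_singleton, Sum.inl.injEq, reduceCtorEq, or_false]
        exact fun hh => h2 (by linear_combination hh)),
      Finset.sum_insert (by simp), Finset.sum_singleton] at h
    exact h
  have E2 : ∀ i : ZMod n, ℓ (Sum.inr (i+2)) + (ℓ (Sum.inr (i-2)) + ℓ (Sum.inl i)) = 0 := by
    intro i
    have h := hw (Sum.inr i)
    rw [vertexWeight_eq', filter_adj_inr h2 i,
      Finset.sum_insert (by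
        simp only [Finset.mem_insert, Finset.mem_singleton, Sum.inr.injEq, reduceCtorEq, or_false]
        exact fun hh => h4 (by linear_combination hh)),
      Finset.sum_insert (by simp), Finset.sum_singleton] at h
    exact h
  have hbb : ∀ i : ZMod n, ℓ (Sum.inr i) = ℓ (Sum.inl (i+1)) + ℓ (Sum.inl (i-1)) :=
    fun i => s1 _ _ _ (E1 i)
  have haa : ∀ i : ZMod n, ℓ (Sum.inl i) = ℓ (Sum.inr (i+2)) + ℓ (Sum.inr (i-2)) :=
    fun i => s1 _ _ _ (E2 i)
  have K : ∀ i : ZMod n, ℓ (Sum.inl (i+6)) =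
      ℓ (Sum.inl (i+4)) + ℓ (Sum.inl (i+3)) + ℓ (Sum.inl (i+2)) + ℓ (Sum.inl i) := by
    intro i
    have h := haa (i+3)
    rw [(by ring : i+3+2 = i+5), (by ring : i+3-2 = i+1), hbb (i+5), hbb (i+1),
      (by ring : i+5+1 = i+6), (by ring : i+5-1 = i+4),
      (by ring : i+1+1 = i+2), (by ring : i+1-1 = i)] at h
    exact s2' _ _ _ _ _ h
  have perl : ∀ i : ZMod n, ℓ (Sum.inl (i+15)) = ℓ (Sum.inl i) :=
    per15 (fun i => ℓ (Sum.inl i)) K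
  have perr : ∀ i : ZMod n, ℓ (Sum.inr (i+15)) = ℓ (Sum.inr i) := by
    intro i
    have h := hbb (i+15)
    rw [(by ring : i+15+1 = i+1+15), (by ring : i+15-1 = i-1+15), perl (i+1), perl (i-1)] at h
    rw [h, hbb i]
  rintro (i | i)
  · exact perl i
  · exact perr i
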